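/- For even n, the real Lie algebra spanned by { i·P(a) : wt(a) odd } on n qubits is isomorphic as a real Lie algebra to so(2^n), the algebra of real antisymmetric matrices (in its complexified skew-symmetric skew-Hermitian form). Specifically, conjugation by U = (I - i Y^{⊗n})/√2 carries { B : Bᵀ = -B, B† = -B } onto { A : Y^{⊗n} Aᵀ Y^{⊗n} = -A, A† = -A }. -/
import Mathlib


open Matrix Complex

noncomputable def pauli : Fin 4 → Matrix (Fin 2) (Fin 2) ℂ
  | 0 => 1
  | 1 => !![0, 1; 1, 0]
  | 2 => !![0, -I; I, 0]
  | 3 => !![1, 0; 0, -1]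

/-- Tensor product of Pauli matrices indexed by `a : Fin n → Fin 4`. -/
noncomputable def PauliProd {n : ℕ} (a : Fin n → Fin 4) :
    Matrix (Fin n → Fin 2) (Fin n → Fin 2) ℂ :=
  Matrix.of fun i j => ∏ k, pauli (a k) (i k) (j k)

/-- Weight: the number of non-identity tensor factors. -/
noncomputable def wt {n : ℕ} (a : Fin n → Fin 4) : ℕ :=
  (Finset.univ.filter fun i => a i ≠ 0).card

/-- Support: the set of qubits on which the Pauli product acts nontrivially. -/
noncomputable def supp {n : ℕ} (a : Fin n → Fin 4) : Finset (Fin n) :=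
  Finset.univ.filter fun i => a i ≠ 0

set_option maxRecDepth 8000

lemma pauli2_sq : pauli 2 * pauli 2 = 1 := by
  ext i j
  fin_cases i <;> fin_cases j <;>
    simp [pauli, Matrix.mul_apply, Fin.sum_univ_two, Matrix.one_apply]

lemma pauli2_swap (a b : Fin 2) : pauli 2 b a = - pauli 2 a b := by
  fin_cases a <;> fin_cases b <;> simp [pauli]

lemma pauli2_conj (a b : Fin 2) : (starRingEnd ℂ) (pauli 2 b a) = pauli 2 a b := by
  fin_cases a <;> fin_cases b <;> simp [pauli]

variable {n : ℕ}

lemma PauliProd_mul (a b : Fin n → Fin 4) :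
    PauliProd a * PauliProd b =
      Matrix.of fun i j => ∏ k, (pauli (a k) * pauli (b k)) (i k) (j k) := by
  ext i j
  simp only [PauliProd, Matrix.mul_apply, Matrix.of_apply]
  rw [Finset.prod_univ_sum, Fintype.piFinset_univ]
  exact Finset.sum_congr rfl fun x _ => by rw [Finset.prod_mul_distrib]

lemma Y_sq : PauliProd (fun _ : Fin n => 2) * PauliProd (fun _ => 2) = 1 := by
  rw [PauliProd_mul]
  ext i j
  simp only [Matrix.of_apply, pauli2_sq, Matrix.one_apply]
  by_cases h : i = j
  · subst h; simp
  · rw [if_neg h]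
    obtain ⟨k, hk⟩ := Function.ne_iff.mp h
    exact Finset.prod_eq_zero (Finset.mem_univ k) (by simp [Matrix.one_apply, hk])

lemma Y_transpose (hn : Even n) :
    (PauliProd (fun _ : Fin n => 2))ᵀ = PauliProd (fun _ => 2) := by
  ext i j
  simp only [Matrix.transpose_apply, PauliProd, Matrix.of_apply]
  rw [Finset.prod_congr rfl (fun k _ => pauli2_swap (i k) (j k))]
  have h2 : (∏ k : Fin n, -pauli 2 (i k) (j k)) = ∏ k : Fin n, (-1 : ℂ) * pauli 2 (i k) (j k) :=
    Finset.prod_congr rfl fun k _ => (neg_one_mul _).symm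
  rw [h2, Finset.prod_mul_distrib, Finset.prod_const, Finset.card_univ, Fintype.card_fin,
    hn.neg_one_pow, one_mul]

lemma Y_herm : (PauliProd (fun _ : Fin n => 2))ᴴ = PauliProd (fun _ => 2) := by
  ext i j
  simp only [Matrix.conjTranspose_apply, PauliProd, Matrix.of_apply, star_def]
  rw [map_prod]
  exact Finset.prod_congr rfl fun k _ => pauli2_conj (i k) (j k)

/-- For even n, conjugation by U = (I - i Y^{⊗n})/√2 carries the defining
representation of so(2^n) onto { A : Y^{⊗n} Aᵀ Y^{⊗n} = -A, A† = -A }. -/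
theorem so_iso_odd_pauli {n : ℕ} (hn : Even n)
    (B : Matrix (Fin n → Fin 2) (Fin n → Fin 2) ℂ) :
    (Bᵀ = -B ∧ Bᴴ = -B) ↔
      (PauliProd (fun _ => 2) *
          (((Real.sqrt 2 : ℂ)⁻¹ • (1 - Complex.I • PauliProd (fun _ => 2))) * B *
            ((Real.sqrt 2 : ℂ)⁻¹ • (1 - Complex.I • PauliProd (fun _ => 2)))ᴴ)ᵀ *
          PauliProd (fun _ => 2)
        = -(((Real.sqrt 2 : ℂ)⁻¹ • (1 - Complex.I • PauliProd (fun _ => 2))) * B *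
            ((Real.sqrt 2 : ℂ)⁻¹ • (1 - Complex.I • PauliProd (fun _ => 2)))ᴴ) ∧
      (((Real.sqrt 2 : ℂ)⁻¹ • (1 - Complex.I • PauliProd (fun _ => 2))) * B *
            ((Real.sqrt 2 : ℂ)⁻¹ • (1 - Complex.I • PauliProd (fun _ => 2)))ᴴ)ᴴ
        = -(((Real.sqrt 2 : ℂ)⁻¹ • (1 - Complex.I • PauliProd (fun _ => 2))) * B *
            ((Real.sqrt 2 : ℂ)⁻¹ • (1 - Complex.I • PauliProd (fun _ => 2)))ᴴ)) := by
  set Y : Matrix (Fin n → Fin 2) (Fin n → Fin 2) ℂ := PauliProd (fun _ => 2) with hYdef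
  set U : Matrix (Fin n → Fin 2) (Fin n → Fin 2) ℂ :=
    (Real.sqrt 2 : ℂ)⁻¹ • (1 - Complex.I • Y) with hUdef
  have hY2 : Y * Y = 1 := Y_sq
  have hYT : Yᵀ = Y := Y_transpose hn
  have hYH : Yᴴ = Y := Y_herm
  have hc : (starRingEnd ℂ) ((Real.sqrt 2 : ℂ)⁻¹) = (Real.sqrt 2 : ℂ)⁻¹ := by
    rw [map_inv₀, Complex.conj_ofReal]
  have hUH : Uᴴ = (Real.sqrt 2 : ℂ)⁻¹ • (1 + Complex.I • Y) := by
    rw [hUdef]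
    simp only [Matrix.conjTranspose_smul, Matrix.conjTranspose_sub, Matrix.conjTranspose_one,
      Matrix.conjTranspose_smul, hYH, Complex.star_def, Complex.conj_I, map_inv₀,
      Complex.conj_ofReal, neg_smul, sub_neg_eq_add]
  have h2 : ((Real.sqrt 2 : ℂ))⁻¹ * ((Real.sqrt 2 : ℂ))⁻¹ = (2 : ℂ)⁻¹ := by
    rw [← mul_inv, ← Complex.ofReal_mul, Real.mul_self_sqrt (by norm_num)]
    norm_num
  have e : Y * (Complex.I • Y) = Complex.I • (1 : Matrix (Fin n → Fin 2) (Fin n → Fin 2) ℂ) := by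
    rw [Matrix.mul_smul, hY2]
  have expand1 : (1 - Complex.I • Y) * (1 + Complex.I • Y) = (2 : ℂ) • 1 := by
    simp only [mul_add, mul_sub, add_mul, sub_mul, one_mul, mul_one, Matrix.smul_mul, e,
      smul_smul, Complex.I_mul_I, neg_smul, one_smul]
    module
  have expand2 : (1 + Complex.I • Y) * (1 - Complex.I • Y) = (2 : ℂ) • 1 := by
    simp only [mul_add, mul_sub, add_mul, sub_mul, one_mul, mul_one, Matrix.smul_mul, e,
      smul_smul, Complex.I_mul_I, neg_smul, one_smul]
    module
  have hUUH : U * Uᴴ = 1 := by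
    rw [hUdef, hUH, Matrix.smul_mul, Matrix.mul_smul, smul_smul, h2, expand1, smul_smul]
    norm_num
  have hUHU : Uᴴ * U = 1 := by
    rw [hUdef, hUH, Matrix.smul_mul, Matrix.mul_smul, smul_smul, h2, expand2, smul_smul]
    norm_num
  have hUY : U * Y = (-Complex.I) • Uᴴ := by
    rw [hUdef, hUH, Matrix.smul_mul, sub_mul, one_mul, Matrix.smul_mul, hY2,
      smul_comm (-Complex.I)]
    congr 1
    rw [smul_add, smul_smul, neg_mul, Complex.I_mul_I, neg_neg, one_smul]
    module
  have hYUH : Y * Uᴴ = Complex.I • U := by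
    rw [hUH, hUdef, Matrix.mul_smul, mul_add, mul_one, Matrix.mul_smul, hY2,
      smul_comm Complex.I]
    congr 1
    rw [smul_sub, smul_smul, Complex.I_mul_I]
    module
  have hUT : Uᵀ = U := by
    rw [hUdef, Matrix.transpose_smul, Matrix.transpose_sub, Matrix.transpose_one,
      Matrix.transpose_smul, hYT]
  have hUHT : (Uᴴ)ᵀ = Uᴴ := by
    rw [hUH, Matrix.transpose_smul, Matrix.transpose_add, Matrix.transpose_one,
      Matrix.transpose_smul, hYT]
  have hAT : (U * B * Uᴴ)ᵀ = Uᴴ * Bᵀ * U := by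
    rw [Matrix.transpose_mul, Matrix.transpose_mul, hUHT, hUT, Matrix.mul_assoc]
  have hAH : (U * B * Uᴴ)ᴴ = U * Bᴴ * Uᴴ := by
    rw [Matrix.conjTranspose_mul, Matrix.conjTranspose_mul,
      Matrix.conjTranspose_conjTranspose, Matrix.mul_assoc]
  have hkey : Y * (Uᴴ * Bᵀ * U) * Y = U * Bᵀ * Uᴴ := by
    have hassoc : Y * (Uᴴ * Bᵀ * U) * Y = (Y * Uᴴ) * Bᵀ * (U * Y) := by
      noncomm_ring
    rw [hassoc, hYUH, hUY, Matrix.smul_mul, Matrix.smul_mul, Matrix.mul_smul, smul_smul]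
    rw [mul_neg, Complex.I_mul_I, neg_neg, one_smul]
  have hconj : ∀ M : Matrix (Fin n → Fin 2) (Fin n → Fin 2) ℂ,
      Uᴴ * (U * M * Uᴴ) * U = M := by
    intro M
    have hassoc : Uᴴ * (U * M * Uᴴ) * U = (Uᴴ * U) * M * (Uᴴ * U) := by noncomm_ring
    rw [hassoc, hUHU, one_mul, mul_one]
  have hinj : ∀ M N : Matrix (Fin n → Fin 2) (Fin n → Fin 2) ℂ,
      U * M * Uᴴ = U * N * Uᴴ → M = N := by
    intro M N h
    have h' := congrArg (fun X => Uᴴ * X * U) h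
    rw [hconj M, hconj N] at h'
    exact h'
  have hneg : ∀ M : Matrix (Fin n → Fin 2) (Fin n → Fin 2) ℂ,
      U * (-M) * Uᴴ = -(U * M * Uᴴ) := by
    intro M; rw [Matrix.mul_neg, Matrix.neg_mul]
  constructor
  · rintro ⟨hBT, hBH⟩
    refine ⟨?_, ?_⟩
    · rw [hAT, hkey, hBT, hneg]
    · rw [hAH, hBH, hneg]
  · rintro ⟨h1, h2'⟩
    rw [hAT, hkey] at h1
    rw [hAH] at h2'
    refine ⟨?_, ?_⟩
    · exact hinj _ _ (by rw [h1, hneg])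
    · exact hinj _ _ (by rw [h2', hneg])
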